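/- Let A ∈ ℝ^{n×n} be symmetric, let λ ∈ ℝ, let g ∈ ℝ^n be nonzero, and let s ∈ ℝ^n satisfy (A + λI)·s = −g. Then for every k ≥ 0, the distance from s to the Krylov subspace K_k(g,A) equals the infimum, over all real polynomials p of degree at most k+1 with p(0) = 1, of ‖p(A + λI)·s‖. -/

import Mathlib

open Matrix

noncomputable section

/-- Euclidean 2-norm of a finitely indexed real vector. -/
def enorm {ι : Type*} [Fintype ι] (v : ι → ℝ) : ℝ := ‖(WithLp.equiv 2 (ι → ℝ)).symm v‖

/-- The Krylov subspace `K_k(g,A) = span{g, Ag, …, A^k g}`. -/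
def krylov {n : ℕ} (A : Matrix (Fin n) (Fin n) ℝ) (g : Fin n → ℝ) (k : ℕ) :
    Submodule ℝ (Fin n → ℝ) :=
  Submodule.span ℝ {v | ∃ i : ℕ, i ≤ k ∧ v = (A ^ i).mulVec g}

/-- Euclidean distance from a vector to the Krylov subspace `K_k(g,A)`. -/
def kdist {n : ℕ} (A : Matrix (Fin n) (Fin n) ℝ) (g : Fin n → ℝ) (k : ℕ)
    (v : Fin n → ℝ) : ℝ :=
  sInf {r : ℝ | ∃ w ∈ krylov A g k, r = _root_.enorm (v - w)}

open Polynomial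

/-- `M ↦ M.mulVec g` as a linear map. -/
def mulVecL {n : ℕ} (g : Fin n → ℝ) : Matrix (Fin n) (Fin n) ℝ →ₗ[ℝ] (Fin n → ℝ) where
  toFun M := M.mulVec g
  map_add' M N := Matrix.add_mulVec M N g
  map_smul' c M := Matrix.smul_mulVec c M g

lemma mem_krylov_iff {n : ℕ} (A : Matrix (Fin n) (Fin n) ℝ) (g : Fin n → ℝ) (k : ℕ)
    (w : Fin n → ℝ) :
    w ∈ krylov A g k ↔ ∃ q : ℝ[X], q.natDegree ≤ k ∧ w = (aeval A q).mulVec g := by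
  constructor
  · intro hw
    induction hw using Submodule.span_induction with
    | mem v hv =>
      obtain ⟨i, hi, rfl⟩ := hv
      exact ⟨X ^ i, by simpa using hi, by simp⟩
    | zero => exact ⟨0, by simp, by simp⟩
    | add x y hx hy ihx ihy =>
      obtain ⟨q1, hq1, rfl⟩ := ihx
      obtain ⟨q2, hq2, rfl⟩ := ihy
      refine ⟨q1 + q2, le_trans (natDegree_add_le _ _) (max_le hq1 hq2), ?_⟩
      rw [map_add, Matrix.add_mulVec]
    | smul c x hx ihx =>
      obtain ⟨q, hq, rfl⟩ := ihx
      refine ⟨c • q, le_trans (natDegree_smul_le _ _) hq, ?_⟩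
      rw [_root_.map_smul, Matrix.smul_mulVec]
  · rintro ⟨q, hq, rfl⟩
    have hrep := q.as_sum_range' (k + 1) (Nat.lt_succ_of_le hq)
    have : (aeval A q).mulVec g = mulVecL g (aeval A q) := rfl
    rw [this, hrep, map_sum, map_sum]
    refine Submodule.sum_mem _ fun i hi => ?_
    have : mulVecL g (aeval A (monomial i (q.coeff i)))
        = q.coeff i • (A ^ i).mulVec g := by
      rw [aeval_monomial, Algebra.algebraMap_eq_smul_one, smul_mul_assoc, one_mul]
      exact (mulVecL g).map_smul _ _
    rw [this]
    exact Submodule.smul_mem _ _ (Submodule.subset_span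
      ⟨i, Nat.lt_succ_iff.mp (Finset.mem_range.mp hi), rfl⟩)

lemma mem_krylov_shift {n : ℕ} (A : Matrix (Fin n) (Fin n) ℝ) (lam : ℝ)
    (g : Fin n → ℝ) (k : ℕ) (w : Fin n → ℝ) :
    w ∈ krylov A g k ↔ ∃ q : ℝ[X], q.natDegree ≤ k ∧
      w = (aeval (A + lam • (1 : Matrix (Fin n) (Fin n) ℝ)) q).mulVec g := by
  rw [mem_krylov_iff]
  have hB : aeval (A + lam • (1 : Matrix (Fin n) (Fin n) ℝ)) (X - C lam) = A := by
    simp [Algebra.algebraMap_eq_smul_one]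
  have hA : aeval A (X + C lam) = A + lam • (1 : Matrix (Fin n) (Fin n) ℝ) := by
    simp [Algebra.algebraMap_eq_smul_one]
  constructor
  · rintro ⟨q, hq, rfl⟩
    refine ⟨q.comp (X - C lam), ?_, ?_⟩
    · rw [natDegree_comp, natDegree_X_sub_C, mul_one]; exact hq
    · rw [aeval_comp, hB]
  · rintro ⟨q, hq, rfl⟩
    refine ⟨q.comp (X + C lam), ?_, ?_⟩
    · rw [natDegree_comp, natDegree_X_add_C, mul_one]; exact hq
    · rw [aeval_comp, hA]

lemma key_calc {n : ℕ} (B : Matrix (Fin n) (Fin n) ℝ) (g s : Fin n → ℝ)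
    (hBs : B.mulVec s = -g) (q : ℝ[X]) :
    (aeval B (q * X + 1)).mulVec s = s - (aeval B q).mulVec g := by
  rw [map_add, _root_.map_mul, aeval_X, _root_.map_one, Matrix.add_mulVec, Matrix.one_mulVec,
    ← Matrix.mulVec_mulVec, hBs, Matrix.mulVec_neg, add_comm, sub_eq_add_neg]

/-- If `A` is symmetric and `(A + λI) s = −g` with `g ≠ 0`, then the distance from `s` to
`K_k(g,A)` equals the infimum over polynomials `p` of degree at most `k+1` with `p(0) = 1`
of `‖p(A + λI) s‖`. -/
theorem stmt_5 {n : ℕ} (A : Matrix (Fin n) (Fin n) ℝ) (hA : A.IsSymm)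
    (lam : ℝ) (g : Fin n → ℝ) (hg : g ≠ 0) (s : Fin n → ℝ)
    (hs : (A + lam • (1 : Matrix (Fin n) (Fin n) ℝ)).mulVec s = -g) :
    ∀ k : ℕ,
      kdist A g k s =
        sInf {r : ℝ | ∃ p : Polynomial ℝ, p.natDegree ≤ k + 1 ∧ p.eval 0 = 1 ∧
          r = _root_.enorm ((Polynomial.aeval
            (A + lam • (1 : Matrix (Fin n) (Fin n) ℝ)) p).mulVec s)} := by
  intro k
  set B := A + lam • (1 : Matrix (Fin n) (Fin n) ℝ) with hBdef
  unfold kdist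
  congr 1
  ext r
  constructor
  · rintro ⟨w, hw, rfl⟩
    rw [mem_krylov_shift A lam] at hw
    obtain ⟨q, hq, rfl⟩ := hw
    refine ⟨q * X + 1, ?_, by simp, ?_⟩
    · refine le_trans (natDegree_add_le _ _) (max_le ?_ (by simp))
      exact le_trans (natDegree_mul_le) (by simpa using Nat.add_le_add_right hq 1)
    · rw [key_calc B g s hs q]
  · rintro ⟨p, hp, h0, rfl⟩
    refine ⟨(aeval B p.divX).mulVec g, ?_, ?_⟩
    · rw [mem_krylov_shift A lam]
      refine ⟨p.divX, ?_, rfl⟩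
      rw [natDegree_divX_eq_natDegree_tsub_one]
      omega
    · have hp' : p.divX * X + 1 = p := by
        have := p.divX_mul_X_add
        rwa [coeff_zero_eq_eval_zero, h0, Polynomial.C_1] at this
      rw [← key_calc B g s hs p.divX, hp']
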